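/- arXiv:1610.03933 — 3 statements merged into one kernel-verified Lean document; each statement's English description precedes it below -/
import Mathlib

section
/- The Goldman Lie algebra 𝔊_ℚ of the closed torus is generated as a Lie algebra over ℚ by the three elements e_{(1,0)}, e_{(0,1)}, and e_{(−1,−1)} + e_{(0,1)} + e_{(0,0)} (i.e., by a, b, and a^{−1}b^{−1} + b + 1): the smallest Lie subalgebra of 𝔊_ℚ containing these three elements is all of 𝔊_ℚ. -/
/-- The underlying module of the Goldman Lie algebra of the closed torus:
the free `R`-module with basis `{e_{(i,j)} : (i,j) ∈ ℤ²}`. -/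
abbrev GoldmanTorus (R : Type*) [CommRing R] := (ℤ × ℤ) →₀ R

/-- `ω((i,j),(k,l)) = i·l − j·k`. -/
def goldmanForm (p q : ℤ × ℤ) : ℤ := p.1 * q.2 - p.2 * q.1

/-- The `R`-bilinear Goldman bracket of the closed torus, determined on basis
elements by `[e_{(i,j)}, e_{(k,l)}] = (i·l − j·k) • e_{(i+k, j+l)}`. -/
noncomputable def goldmanBracket (R : Type*) [CommRing R] :
    GoldmanTorus R →ₗ[R] GoldmanTorus R →ₗ[R] GoldmanTorus R :=
  Finsupp.lsum R fun p =>
    LinearMap.toSpanSingleton R (GoldmanTorus R →ₗ[R] GoldmanTorus R)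
      (Finsupp.lsum R fun q =>
        LinearMap.toSpanSingleton R (GoldmanTorus R)
          (goldmanForm p q • Finsupp.single (p + q) (1 : R)))

lemma goldmanBracket_single {R : Type*} [CommRing R] (p q : ℤ × ℤ) (a b : R) :
    goldmanBracket R (Finsupp.single p a) (Finsupp.single q b)
      = Finsupp.single (p + q) (a * b * (goldmanForm p q : R)) := by
  simp only [goldmanBracket, Finsupp.lsum_single, LinearMap.toSpanSingleton_apply,
    LinearMap.smul_apply, Finsupp.smul_single, smul_eq_mul, zsmul_eq_mul, mul_one]
  rw [mul_assoc]

lemma goldmanForm_swap (p q : ℤ × ℤ) : goldmanForm q p = - goldmanForm p q := by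
  simp only [goldmanForm]; ring

lemma goldmanBracket_add_comm_single {R : Type*} [CommRing R] (p : ℤ × ℤ) (a : R)
    (y : GoldmanTorus R) :
    goldmanBracket R (Finsupp.single p a) y + goldmanBracket R y (Finsupp.single p a) = 0 := by
  induction y using Finsupp.induction with
  | zero => simp
  | single_add q b f _ _ ih =>
    rw [map_add, map_add, LinearMap.add_apply]
    have h2 : goldmanBracket R (Finsupp.single p a) (Finsupp.single q b)
        + goldmanBracket R (Finsupp.single q b) (Finsupp.single p a) = 0 := by
      have hz : a * b * ((goldmanForm p q : ℤ) : R)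
          + b * a * ((goldmanForm q p : ℤ) : R) = 0 := by
        rw [goldmanForm_swap p q]; push_cast; ring
      rw [goldmanBracket_single, goldmanBracket_single, add_comm q p,
        ← Finsupp.single_add, hz, Finsupp.single_zero]
    calc goldmanBracket R (Finsupp.single p a) (Finsupp.single q b)
          + goldmanBracket R (Finsupp.single p a) f
          + (goldmanBracket R (Finsupp.single q b) (Finsupp.single p a)
          + goldmanBracket R f (Finsupp.single p a))
        = (goldmanBracket R (Finsupp.single p a) (Finsupp.single q b)
          + goldmanBracket R (Finsupp.single q b) (Finsupp.single p a))
          + (goldmanBracket R (Finsupp.single p a) f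
          + goldmanBracket R f (Finsupp.single p a)) := by abel
      _ = 0 := by rw [h2, ih, add_zero]

lemma goldmanBracket_add_comm {R : Type*} [CommRing R] (x y : GoldmanTorus R) :
    goldmanBracket R x y + goldmanBracket R y x = 0 := by
  induction x using Finsupp.induction with
  | zero => simp
  | single_add p a f _ _ ih =>
    rw [map_add, LinearMap.add_apply, map_add]
    calc goldmanBracket R (Finsupp.single p a) y + goldmanBracket R f y
          + (goldmanBracket R y (Finsupp.single p a) + goldmanBracket R y f)
        = (goldmanBracket R (Finsupp.single p a) y
            + goldmanBracket R y (Finsupp.single p a))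
          + (goldmanBracket R f y + goldmanBracket R y f) := by abel
      _ = 0 := by rw [goldmanBracket_add_comm_single, ih, add_zero]

lemma goldmanBracket_self {R : Type*} [CommRing R] (x : GoldmanTorus R) :
    goldmanBracket R x x = 0 := by
  induction x using Finsupp.induction with
  | zero => simp
  | single_add p a f _ _ ih =>
    simp only [map_add, LinearMap.add_apply]
    have hpp : goldmanBracket R (Finsupp.single p a) (Finsupp.single p a) = 0 := by
      rw [goldmanBracket_single]
      have : goldmanForm p p = 0 := by simp [goldmanForm]; ring
      simp [this]
    rw [hpp, ih]
    have h := goldmanBracket_add_comm_single p a f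
    abel_nf at h ⊢
    exact h

lemma goldmanBracket_leibniz₃ {R : Type*} [CommRing R] (p q r : ℤ × ℤ) (a b c : R) :
    goldmanBracket R (Finsupp.single p a)
        (goldmanBracket R (Finsupp.single q b) (Finsupp.single r c))
      = goldmanBracket R (goldmanBracket R (Finsupp.single p a) (Finsupp.single q b))
          (Finsupp.single r c)
        + goldmanBracket R (Finsupp.single q b)
            (goldmanBracket R (Finsupp.single p a) (Finsupp.single r c)) := by
  simp only [goldmanBracket_single]
  rw [add_assoc p q r, add_left_comm q p r, ← Finsupp.single_add]
  congr 1
  simp only [goldmanForm, Prod.fst_add, Prod.snd_add]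
  push_cast
  ring

lemma goldmanBracket_leibniz₂ {R : Type*} [CommRing R] (p q : ℤ × ℤ) (a b : R)
    (z : GoldmanTorus R) :
    goldmanBracket R (Finsupp.single p a) (goldmanBracket R (Finsupp.single q b) z)
      = goldmanBracket R (goldmanBracket R (Finsupp.single p a) (Finsupp.single q b)) z
        + goldmanBracket R (Finsupp.single q b)
            (goldmanBracket R (Finsupp.single p a) z) := by
  induction z using Finsupp.induction with
  | zero => simp
  | single_add r c f _ _ ih =>
    simp only [map_add]
    rw [goldmanBracket_leibniz₃, ih]
    abel

lemma goldmanBracket_leibniz₁ {R : Type*} [CommRing R] (p : ℤ × ℤ) (a : R)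
    (y z : GoldmanTorus R) :
    goldmanBracket R (Finsupp.single p a) (goldmanBracket R y z)
      = goldmanBracket R (goldmanBracket R (Finsupp.single p a) y) z
        + goldmanBracket R y (goldmanBracket R (Finsupp.single p a) z) := by
  induction y using Finsupp.induction with
  | zero => simp
  | single_add q b f _ _ ih =>
    simp only [map_add, LinearMap.add_apply]
    rw [goldmanBracket_leibniz₂, ih]
    abel

lemma goldmanBracket_leibniz {R : Type*} [CommRing R] (x y z : GoldmanTorus R) :
    goldmanBracket R x (goldmanBracket R y z)
      = goldmanBracket R (goldmanBracket R x y) z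
        + goldmanBracket R y (goldmanBracket R x z) := by
  induction x using Finsupp.induction with
  | zero => simp
  | single_add p a f _ _ ih =>
    simp only [map_add, LinearMap.add_apply]
    rw [goldmanBracket_leibniz₁, ih]
    abel

/-- The Goldman Lie ring structure on the free module over `ℤ²`. -/
noncomputable instance (R : Type*) [CommRing R] : LieRing (GoldmanTorus R) where
  bracket x y := goldmanBracket R x y
  add_lie x y z := by simp
  lie_add x y z := by simp
  lie_self x := goldmanBracket_self x
  leibniz_lie x y z := goldmanBracket_leibniz x y z

/-- The Goldman Lie algebra of the closed torus over `R`. -/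
noncomputable instance (R : Type*) [CommRing R] : LieAlgebra R (GoldmanTorus R) where
  lie_smul r x y := by
    show goldmanBracket R x (r • y) = r • goldmanBracket R x y
    simp

lemma goldmanTorus_lie_def {R : Type*} [CommRing R] (x y : GoldmanTorus R) :
    ⁅x, y⁆ = goldmanBracket R x y := rfl

/-!
Basis vectors bracket as `⁅e_p, e_q⁆ = ω(p, q) • e_{p+q}`, so over `ℚ` a Lie subalgebra
containing `e_p` and `e_q` with `ω(p, q) ≠ 0` contains `e_{p+q}`. Since
`ω(d, p + n • d) = ω(d, p)`, a subalgebra containing `e_d`, `e_{-d}` and `e_p` with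
`ω(d, p) ≠ 0` contains the whole line `e_{p + ℤ d}`, and lines in the two coordinate directions
through `(1, 0)` reach every point of `ℤ²` except the origin. With `a, b, c` the three
generators, `⁅b, c⁆ = e_{(-1,0)}` and `⁅a, b⁆ - ⁅a, c⁆ = e_{(0,-1)}`; the central element
`e_{(0,0)}` is never a bracket and is recovered as `c - b - ⁅e_{(-1,0)}, e_{(0,-1)}⁆`.
-/

open Finsupp

lemma goldmanForm_neg_left (p q : ℤ × ℤ) : goldmanForm (-p) q = -goldmanForm p q := by
  simp only [goldmanForm, Prod.fst_neg, Prod.snd_neg]; ring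

lemma goldmanForm_add_zsmul_self_right (p q : ℤ × ℤ) (n : ℤ) :
    goldmanForm p (q + n • p) = goldmanForm p q := by
  simp only [goldmanForm, Prod.fst_add, Prod.snd_add, Prod.smul_fst, Prod.smul_snd, smul_eq_mul]
  ring

namespace GoldmanTorus

lemma lie_single_single {R : Type*} [CommRing R] (p q : ℤ × ℤ) (a b : R) :
    ⁅single p a, single q b⁆ = single (p + q) (a * b * (goldmanForm p q : R)) :=
  goldmanBracket_single p q a b

lemma eq_top_of_forall_single_mem {R : Type*} [CommRing R]
    {S : LieSubalgebra R (GoldmanTorus R)} (h : ∀ p, single p (1 : R) ∈ S) : S = ⊤ := by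
  rw [← LieSubalgebra.toSubmodule_eq_top, eq_top_iff, ← (Finsupp.basisSingleOne).span_eq,
    Submodule.span_le]
  rintro _ ⟨p, rfl⟩
  exact h p

variable {K : Type*} [Field K] [CharZero K] {S : LieSubalgebra K (GoldmanTorus K)}

lemma single_add_mem {p q : ℤ × ℤ} (hp : single p (1 : K) ∈ S) (hq : single q (1 : K) ∈ S)
    (h : goldmanForm p q ≠ 0) : single (p + q) (1 : K) ∈ S := by
  have hpq := S.smul_mem (goldmanForm p q : K)⁻¹ (S.lie_mem hp hq)
  rwa [lie_single_single, smul_single, smul_eq_mul, one_mul, one_mul,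
    inv_mul_cancel₀ (by exact_mod_cast h)] at hpq

lemma single_add_zsmul_mem {d p : ℤ × ℤ} (hd : single d (1 : K) ∈ S)
    (hnd : single (-d) (1 : K) ∈ S) (hp : single p (1 : K) ∈ S) (h : goldmanForm d p ≠ 0)
    (n : ℤ) : single (p + n • d) (1 : K) ∈ S := by
  induction n using Int.induction_on with
  | zero => simpa using hp
  | succ n ih =>
    have := single_add_mem hd ih (by rwa [goldmanForm_add_zsmul_self_right])
    convert this using 2
    module
  | pred n ih =>
    have := single_add_mem hnd ih
      (by rwa [goldmanForm_neg_left, goldmanForm_add_zsmul_self_right, neg_ne_zero])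
    convert this using 2
    module

lemma forall_single_mem (h₀ : single 0 (1 : K) ∈ S)
    (ha : single (1, 0) (1 : K) ∈ S) (ha' : single (-1, 0) (1 : K) ∈ S)
    (hb : single (0, 1) (1 : K) ∈ S) (hb' : single (0, -1) (1 : K) ∈ S) :
    ∀ p, single p (1 : K) ∈ S := by
  have col_one (j : ℤ) : single (1, j) (1 : K) ∈ S := by
    simpa using single_add_zsmul_mem hb hb' ha (by decide) j
  have row (j : ℤ) (hj : j ≠ 0) (i : ℤ) : single (i, j) (1 : K) ∈ S := by
    simpa using single_add_zsmul_mem ha ha' (col_one j) (by simpa [goldmanForm]) (i - 1)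
  rintro ⟨i, j⟩
  rcases eq_or_ne j 0 with rfl | hj
  · rcases eq_or_ne i 0 with rfl | hi
    · exact h₀
    · simpa using single_add_zsmul_mem hb hb' (row 1 one_ne_zero i) (by simpa [goldmanForm]) (-1)
  · exact row j hj i

end GoldmanTorus

theorem goldmanTorus_rat_generated_by_three :
    LieSubalgebra.lieSpan ℚ (GoldmanTorus ℚ)
      {Finsupp.single (1, 0) 1, Finsupp.single (0, 1) 1,
        Finsupp.single (-1, -1) 1 + Finsupp.single (0, 1) 1 + Finsupp.single (0, 0) 1}
      = ⊤ := by
  set a : GoldmanTorus ℚ := single (1, 0) 1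
  set b : GoldmanTorus ℚ := single (0, 1) 1
  set c : GoldmanTorus ℚ := single (-1, -1) 1 + b + single (0, 0) 1
  set S := LieSubalgebra.lieSpan ℚ (GoldmanTorus ℚ) {a, b, c}
  have ha : a ∈ S := LieSubalgebra.subset_lieSpan (by simp)
  have hb : b ∈ S := LieSubalgebra.subset_lieSpan (by simp)
  have hc : c ∈ S := LieSubalgebra.subset_lieSpan (by simp)
  have ha' : single (-1, 0) (1 : ℚ) ∈ S := by
    have hbc : ⁅b, c⁆ = single (-1, 0) 1 := by
      simp [b, c, GoldmanTorus.lie_single_single, goldmanForm]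
    exact hbc ▸ S.lie_mem hb hc
  have hb' : single (0, -1) (1 : ℚ) ∈ S := by
    have habc : ⁅a, b⁆ - ⁅a, c⁆ = single (0, -1) 1 := by
      simp [a, b, c, GoldmanTorus.lie_single_single, goldmanForm]
    exact habc ▸ S.sub_mem (S.lie_mem ha hb) (S.lie_mem ha hc)
  have hab' : single (-1, -1) (1 : ℚ) ∈ S := by
    simpa using GoldmanTorus.single_add_mem ha' hb' (by decide)
  have h₀ : single 0 (1 : ℚ) ∈ S := by
    have hc' : c - b - single (-1, -1) 1 = single 0 1 := by
      simp only [c, Prod.mk_zero_zero]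
      abel
    exact hc' ▸ S.sub_mem (S.sub_mem hc hb) hab'
  exact GoldmanTorus.eq_top_of_forall_single_mem (GoldmanTorus.forall_single_mem h₀ ha ha' hb hb')
end

section
/- The derived Lie subalgebra of the Goldman Lie algebra 𝔊_ℤ of the closed torus equals, as a ℤ-submodule, the span of the set {gcd(i,j)·e_{(i,j)} : (i,j) ∈ ℤ², (i,j) ≠ (0,0)}; equivalently, an element w ∈ 𝔊_ℤ lies in [𝔊_ℤ, 𝔊_ℤ] if and only if its coefficient at (0,0) is zero and for every (i,j) ≠ (0,0) its coefficient at (i,j) is divisible by gcd(i,j). -/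
lemma goldmanForm_add_right_self (p q : ℤ × ℤ) : goldmanForm p (p + q) = goldmanForm p q := by
  simp only [goldmanForm, Prod.fst_add, Prod.snd_add]; ring

lemma gcd_dvd_goldmanForm (p r : ℤ × ℤ) : (Int.gcd r.1 r.2 : ℤ) ∣ goldmanForm p r :=
  dvd_sub ((Int.gcd_dvd_right _ _).mul_left _) ((Int.gcd_dvd_left _ _).mul_left _)

/-- At `p = 0` the condition says that the coefficient vanishes, as `gcd 0 0 = 0`. -/
noncomputable def gcdDvdCoeffs : Submodule ℤ (GoldmanTorus ℤ) :=
  ⨅ p : ℤ × ℤ, Submodule.comap (Finsupp.lapply p) (Ideal.span {(Int.gcd p.1 p.2 : ℤ)})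

lemma mem_gcdDvdCoeffs {w : GoldmanTorus ℤ} :
    w ∈ gcdDvdCoeffs ↔ ∀ p : ℤ × ℤ, (Int.gcd p.1 p.2 : ℤ) ∣ w p := by
  simp [gcdDvdCoeffs, Submodule.mem_iInf, Ideal.mem_span_singleton]

lemma goldmanBracket_single_mem_gcdDvdCoeffs (p q : ℤ × ℤ) (a b : ℤ) :
    goldmanBracket ℤ (Finsupp.single p a) (Finsupp.single q b) ∈ gcdDvdCoeffs := by
  rw [mem_gcdDvdCoeffs, goldmanBracket_single]
  intro r
  rw [Finsupp.single_apply]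
  split_ifs with hr
  · subst hr
    rw [← goldmanForm_add_right_self, Int.cast_id]
    exact (gcd_dvd_goldmanForm p (p + q)).mul_left _
  · exact dvd_zero _

lemma goldmanBracket_mem_gcdDvdCoeffs (x y : GoldmanTorus ℤ) :
    goldmanBracket ℤ x y ∈ gcdDvdCoeffs := by
  induction x using Finsupp.induction_linear with
  | zero => simp
  | add x₁ x₂ h₁ h₂ => rw [map_add, LinearMap.add_apply]; exact add_mem h₁ h₂
  | single p a =>
    induction y using Finsupp.induction_linear with
    | zero => simp
    | add y₁ y₂ h₁ h₂ => rw [map_add]; exact add_mem h₁ h₂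
    | single q b => exact goldmanBracket_single_mem_gcdDvdCoeffs p q a b

lemma derived_le_gcdDvdCoeffs :
    ((⁅(⊤ : LieIdeal ℤ (GoldmanTorus ℤ)), (⊤ : LieIdeal ℤ (GoldmanTorus ℤ))⁆ :
        LieIdeal ℤ (GoldmanTorus ℤ)) : Submodule ℤ (GoldmanTorus ℤ)) ≤ gcdDvdCoeffs := by
  rw [LieIdeal.toLieSubalgebra_toSubmodule, LieSubmodule.lieIdeal_oper_eq_linear_span',
    Submodule.span_le]
  rintro _ ⟨x, -, y, -, rfl⟩
  exact goldmanBracket_mem_gcdDvdCoeffs x y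

lemma gcdDvdCoeffs_le_span :
    gcdDvdCoeffs ≤ Submodule.span ℤ {w : GoldmanTorus ℤ | ∃ p : ℤ × ℤ, p ≠ 0 ∧
      w = (Int.gcd p.1 p.2 : ℤ) • Finsupp.single p 1} := by
  intro w hw
  rw [mem_gcdDvdCoeffs] at hw
  rw [← Finsupp.sum_single w]
  refine Submodule.finsuppSum_mem _ _ _ _ fun p _ => ?_
  obtain ⟨c, hc⟩ := hw p
  rcases eq_or_ne p 0 with rfl | hp
  · simp [zero_dvd_iff.mp (hw 0)]
  · rw [hc, ← mul_one (_ * c), ← smul_eq_mul, ← Finsupp.smul_single, mul_comm, mul_smul]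
    exact Submodule.smul_mem _ _ (Submodule.subset_span ⟨p, hp, rfl⟩)

lemma gcd_smul_single_mem_derived (p : ℤ × ℤ) :
    (Int.gcd p.1 p.2 : ℤ) • Finsupp.single p (1 : ℤ) ∈
      ((⁅(⊤ : LieIdeal ℤ (GoldmanTorus ℤ)), (⊤ : LieIdeal ℤ (GoldmanTorus ℤ))⁆ :
        LieIdeal ℤ (GoldmanTorus ℤ)) : Submodule ℤ (GoldmanTorus ℤ)) := by
  set u : ℤ × ℤ := (Int.gcdB p.1 p.2, -Int.gcdA p.1 p.2)
  have hbracket : ⁅Finsupp.single u (1 : ℤ), Finsupp.single (p - u) (1 : ℤ)⁆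
      = (Int.gcd p.1 p.2 : ℤ) • Finsupp.single p (1 : ℤ) := by
    rw [goldmanTorus_lie_def, goldmanBracket_single, ← goldmanForm_add_right_self,
      add_sub_cancel, Finsupp.smul_single, Int.gcd_eq_gcd_ab]
    simp only [goldmanForm, u, Int.cast_id]
    ring_nf
  rw [← hbracket]
  exact LieSubmodule.lie_mem_lie (LieSubmodule.mem_top _) (LieSubmodule.mem_top _)

lemma span_le_derived :
    Submodule.span ℤ {w : GoldmanTorus ℤ | ∃ p : ℤ × ℤ, p ≠ 0 ∧
      w = (Int.gcd p.1 p.2 : ℤ) • Finsupp.single p 1} ≤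
    ((⁅(⊤ : LieIdeal ℤ (GoldmanTorus ℤ)), (⊤ : LieIdeal ℤ (GoldmanTorus ℤ))⁆ :
        LieIdeal ℤ (GoldmanTorus ℤ)) : Submodule ℤ (GoldmanTorus ℤ)) := by
  rw [Submodule.span_le]
  rintro _ ⟨p, -, rfl⟩
  exact gcd_smul_single_mem_derived p

theorem goldmanTorus_int_derived_eq_span :
    ((⁅(⊤ : LieIdeal ℤ (GoldmanTorus ℤ)), (⊤ : LieIdeal ℤ (GoldmanTorus ℤ))⁆ :
        LieIdeal ℤ (GoldmanTorus ℤ)) : Submodule ℤ (GoldmanTorus ℤ))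
      = Submodule.span ℤ {w : GoldmanTorus ℤ | ∃ p : ℤ × ℤ, p ≠ 0 ∧
          w = (Int.gcd p.1 p.2 : ℤ) • Finsupp.single p 1} ∧
    ∀ w : GoldmanTorus ℤ,
      (w ∈ ⁅(⊤ : LieIdeal ℤ (GoldmanTorus ℤ)), (⊤ : LieIdeal ℤ (GoldmanTorus ℤ))⁆ ↔
        (w (0, 0) = 0 ∧
          ∀ i j : ℤ, (i, j) ≠ (0, 0) → (Int.gcd i j : ℤ) ∣ w (i, j))) := by
  have derived_eq : ((⁅(⊤ : LieIdeal ℤ (GoldmanTorus ℤ)), (⊤ : LieIdeal ℤ (GoldmanTorus ℤ))⁆ :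
        LieIdeal ℤ (GoldmanTorus ℤ)) : Submodule ℤ (GoldmanTorus ℤ)) = gcdDvdCoeffs :=
    le_antisymm derived_le_gcdDvdCoeffs (gcdDvdCoeffs_le_span.trans span_le_derived)
  refine ⟨le_antisymm (derived_eq.le.trans gcdDvdCoeffs_le_span) span_le_derived, fun w => ?_⟩
  rw [show w ∈ ⁅(⊤ : LieIdeal ℤ (GoldmanTorus ℤ)), ⊤⁆ ↔ w ∈ gcdDvdCoeffs from
    SetLike.ext_iff.mp derived_eq w, mem_gcdDvdCoeffs, Prod.forall]
  constructor
  · intro h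
    exact ⟨zero_dvd_iff.mp (h 0 0), fun i j _ => h i j⟩
  · rintro ⟨h0, h⟩ i j
    by_cases hij : (i, j) = (0, 0)
    · obtain ⟨rfl, rfl⟩ := Prod.mk.inj hij
      simp [h0]
    · exact h i j hij
end

section
/- The Goldman Lie algebra 𝔊_ℤ of the closed torus is not nilpotent as a Lie algebra over ℤ: every term of its lower central series is nonzero. -/
/-! Bracketing with `e_{(0,1)}` sends `e_{(1,n)}` to `-e_{(1,n+1)}`, so by induction the basis
vector `e_{(1,n)}` lies in the `n`-th term of the lower central series, which is therefore
nonzero over any nontrivial ring. -/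

section

variable {R : Type*} [CommRing R]

lemma goldmanTorus_lie_single_zero_one_single_one (m : ℤ) :
    ⁅(Finsupp.single (0, 1) 1 : GoldmanTorus R), (Finsupp.single (1, m) 1 : GoldmanTorus R)⁆
      = -(Finsupp.single (1, m + 1) 1 : GoldmanTorus R) := by
  rw [goldmanTorus_lie_def, goldmanBracket_single, ← Finsupp.single_neg]
  simp [goldmanForm, add_comm]

lemma goldmanTorus_single_one_mem_lowerCentralSeries (n : ℕ) :
    (Finsupp.single (1, (n : ℤ)) 1 : GoldmanTorus R)
      ∈ LieModule.lowerCentralSeries R (GoldmanTorus R) (GoldmanTorus R) n := by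
  induction n with
  | zero => simp
  | succ k ih =>
    have hlie := LieSubmodule.lie_mem_lie
      (LieSubmodule.mem_top (Finsupp.single (0, 1) 1 : GoldmanTorus R)) ih
    rw [goldmanTorus_lie_single_zero_one_single_one] at hlie
    rw [LieModule.lowerCentralSeries_succ, Nat.cast_succ]
    simpa using neg_mem hlie

lemma goldmanTorus_lowerCentralSeries_ne_bot [Nontrivial R] (n : ℕ) :
    LieModule.lowerCentralSeries R (GoldmanTorus R) (GoldmanTorus R) n ≠ ⊥ := by
  intro hbot
  have hmem := goldmanTorus_single_one_mem_lowerCentralSeries (R := R) n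
  rw [hbot, LieSubmodule.mem_bot, Finsupp.single_eq_zero] at hmem
  exact one_ne_zero hmem

end

theorem goldmanTorus_int_not_nilpotent :
    ∀ n : ℕ, LieModule.lowerCentralSeries ℤ (GoldmanTorus ℤ) (GoldmanTorus ℤ) n ≠ ⊥ :=
  goldmanTorus_lowerCentralSeries_ne_bot
end
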